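/- Suppose 𝒢 = {Ĝ} and ℋ = {Ĥ} are singletons of integrable nonnegative random variables, let x > 0, and suppose there exists an 𝓕-measurable random variable Y such that the function g(y) := 𝔼[Ĥ·1_{{Y < y}}] is continuous on ℝ. Then there exists a set A ∈ 𝓕 such that the pure test 1_A satisfies 𝔼[Ĥ·1_A] ≤ x and 𝔼[Ĝ·1_A] = V(x); consequently V₁(x) = V(x). -/

import Mathlib

open MeasureTheory

namespace QH

variable {Ω : Type*} [MeasurableSpace Ω]

/-- The set of nonnegative measurable random variables. -/
def L0plus (Ω : Type*) [MeasurableSpace Ω] : Set (Ω → ℝ) :=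
  {f | Measurable f ∧ ∀ ω, 0 ≤ f ω}

/-- A randomized test: a measurable function with values in `[0,1]`. -/
def IsRandTest (X : Ω → ℝ) : Prop :=
  Measurable X ∧ ∀ ω, X ω ∈ Set.Icc (0 : ℝ) 1

/-- The feasible randomized tests for significance level `x` and null collection `H`. -/
def Tests (μ : Measure Ω) (H : Set (Ω → ℝ)) (x : ℝ) : Set (Ω → ℝ) :=
  {X | IsRandTest X ∧ ∀ h ∈ H, ∫ ω, h ω * X ω ∂μ ≤ x}

/-- The worst-case power of a test `X` over the alternative collection `G`. -/
noncomputable def powerInf (μ : Measure Ω) (G : Set (Ω → ℝ)) (X : Ω → ℝ) : ℝ :=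
  sInf ((fun g => ∫ ω, g ω * X ω ∂μ) '' G)

/-- The value of the randomized composite hypothesis testing problem. -/
noncomputable def V (μ : Measure Ω) (G H : Set (Ω → ℝ)) (x : ℝ) : ℝ :=
  sSup (powerInf μ G '' Tests μ H x)

/-- The value of the pure composite hypothesis testing problem. -/
noncomputable def V1 (μ : Measure Ω) (G H : Set (Ω → ℝ)) (x : ℝ) : ℝ :=
  sSup (powerInf μ G '' {X ∈ Tests μ H x | ∀ ω, X ω = 0 ∨ X ω = 1})

/-- The set `ℋₓ` of nonnegative random variables that satisfy the budget
constraint against every feasible randomized test. -/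
def HxSet (μ : Measure Ω) (H : Set (Ω → ℝ)) (x : ℝ) : Set (Ω → ℝ) :=
  {h | h ∈ L0plus Ω ∧ ∀ X ∈ Tests μ H x, ∫ ω, h ω * X ω ∂μ ≤ x}

/-- A set of (nonnegative) random variables is closed under convergence in probability,
as a subset of `L⁰⁺`. -/
def ClosedInProb (μ : Measure Ω) (S : Set (Ω → ℝ)) : Prop :=
  ∀ (f : ℕ → Ω → ℝ) (g : Ω → ℝ), (∀ n, f n ∈ S) → g ∈ L0plus Ω →
    TendstoInMeasure μ f Filter.atTop g → g ∈ S

/-- The closure of a set of random variables under convergence in probability. -/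
def clProb (μ : Measure Ω) (S : Set (Ω → ℝ)) : Set (Ω → ℝ) :=
  {g | ∃ f : ℕ → Ω → ℝ, (∀ n, f n ∈ S) ∧ TendstoInMeasure μ f Filter.atTop g}

/-- Assumption (A1): `𝒢, ℋ ⊆ L⁰⁺`, `sup_{X ∈ 𝒢∪ℋ} 𝔼[X] < ∞`, and `𝒢` is convex and
closed under convergence in probability. -/
def A1 (μ : Measure Ω) (G H : Set (Ω → ℝ)) : Prop :=
  G ⊆ L0plus Ω ∧ H ⊆ L0plus Ω ∧ (∀ f ∈ G ∪ H, Integrable f μ) ∧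
  BddAbove ((fun f => ∫ ω, f ω ∂μ) '' (G ∪ H)) ∧
  Convex ℝ G ∧ ClosedInProb μ G

/-- The smallest σ-algebra making every random variable in `G ∪ H` measurable. -/
def sigmaGen (G H : Set (Ω → ℝ)) : MeasurableSpace Ω :=
  ⨆ f ∈ G ∪ H, MeasurableSpace.comap f inferInstance

/-- The Neyman–Pearson conditions at level `x` for the tuple `(Ĝ, Ĥ, â, X̂, B)`. -/
def NPconds (μ : Measure Ω) (G H : Set (Ω → ℝ)) (x : ℝ)
    (Ghat Hhat : Ω → ℝ) (ahat : ℝ) (Xhat B : Ω → ℝ) : Prop :=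
  Ghat ∈ G ∧ Hhat ∈ clProb μ (convexHull ℝ H) ∧ 0 ≤ ahat ∧ Xhat ∈ Tests μ H x ∧
  Measurable B ∧ (∀ ω, B ω ∈ Set.Icc (0 : ℝ) 1) ∧
  (∀ ω, Xhat ω = (if ahat * Hhat ω < Ghat ω then 1 else 0)
      + B ω * (if Ghat ω = ahat * Hhat ω then 1 else 0)) ∧
  (∀ h ∈ H, ∫ ω, h ω * Xhat ω ∂μ ≤ ∫ ω, Hhat ω * Xhat ω ∂μ) ∧
  (∫ ω, Hhat ω * Xhat ω ∂μ = x) ∧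
  (∀ g ∈ G, ∫ ω, Ghat ω * Xhat ω ∂μ ≤ ∫ ω, g ω * Xhat ω ∂μ)

end QH

/-!
Neyman–Pearson with a Lagrange multiplier `a ≥ 0`: if `{a Ĥ < Ĝ} ⊆ A ⊆ {a Ĥ ≤ Ĝ}` then
`(Ĝ - a Ĥ)(1_A - X) ≥ 0` pointwise, so integrating shows that `1_A` beats every test `X` with
`𝔼[Ĥ X] ≤ 𝔼[Ĥ 1_A]`. The multiplier is a quantile of `Ĝ / Ĥ` under the finite measure
`ν = Ĥ · μ`, which makes `ν {a Ĥ < Ĝ} ≤ x ≤ ν {a Ĥ ≤ Ĝ}`. Continuity of `y ↦ ν {Y < y}` lets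
the intermediate value theorem cut the tie set `{a Ĥ = Ĝ}` along `{Y < y}` to any prescribed
mass, so `A` can be chosen with `ν A = x` and no randomization is needed.
-/

open MeasureTheory Filter Set Topology

theorem continuous_of_dist_le_dist {α β γ : Type*} [TopologicalSpace α] [PseudoMetricSpace β]
    [PseudoMetricSpace γ] {f : α → β} {g : α → γ} (hg : Continuous g)
    (hfg : ∀ y z, dist (f y) (f z) ≤ dist (g y) (g z)) : Continuous f :=
  continuous_iff_continuousAt.2 fun y => tendsto_iff_dist_tendsto_zero.2 <|
    squeeze_zero (fun _ => dist_nonneg) (fun z => hfg z y)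
      (tendsto_iff_dist_tendsto_zero.1 (hg.tendsto y))

section

variable {Ω : Type*} [MeasurableSpace Ω] {ν : Measure Ω} [IsFiniteMeasure ν]

theorem tendsto_measureReal_iUnion_atTop {ι : Type*} [Preorder ι]
    [IsCountablyGenerated (atTop : Filter ι)] {s : ι → Set Ω} (hs : Monotone s) :
    Tendsto (fun i => ν.real (s i)) atTop (𝓝 (ν.real (⋃ i, s i))) :=
  (ENNReal.tendsto_toReal (measure_ne_top ν _)).comp (tendsto_measure_iUnion_atTop hs)

theorem tendsto_measureReal_iUnion_atBot {ι : Type*} [Preorder ι]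
    [IsCountablyGenerated (atBot : Filter ι)] {s : ι → Set Ω} (hs : Antitone s) :
    Tendsto (fun i => ν.real (s i)) atBot (𝓝 (ν.real (⋃ i, s i))) :=
  (ENNReal.tendsto_toReal (measure_ne_top ν _)).comp (tendsto_measure_iUnion_atBot hs)

theorem tendsto_measureReal_iInter_atTop {ι : Type*} [Preorder ι]
    [IsCountablyGenerated (atTop : Filter ι)] [Nonempty ι] {s : ι → Set Ω}
    (hsm : ∀ i, MeasurableSet (s i)) (hs : Antitone s) :
    Tendsto (fun i => ν.real (s i)) atTop (𝓝 (ν.real (⋂ i, s i))) :=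
  (ENNReal.tendsto_toReal (measure_ne_top ν _)).comp
    (tendsto_measure_iInter_atTop (fun i => (hsm i).nullMeasurableSet) hs
      ⟨Classical.arbitrary ι, measure_ne_top ν _⟩)

theorem tendsto_measureReal_iInter_atBot {ι : Type*} [Preorder ι]
    [IsCountablyGenerated (atBot : Filter ι)] [Nonempty ι] {s : ι → Set Ω}
    (hsm : ∀ i, MeasurableSet (s i)) (hs : Monotone s) :
    Tendsto (fun i => ν.real (s i)) atBot (𝓝 (ν.real (⋂ i, s i))) :=
  (ENNReal.tendsto_toReal (measure_ne_top ν _)).comp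
    (tendsto_measure_iInter_atBot (fun i => (hsm i).nullMeasurableSet) hs
      ⟨Classical.arbitrary ι, measure_ne_top ν _⟩)

theorem exists_measureReal_lt_le_le_measureReal_le {f : Ω → ℝ} (hf : Measurable f) {x : ℝ}
    (hx₀ : 0 < x) (hx : x < ν.real univ) :
    ∃ a, ν.real {ω | a < f ω} ≤ x ∧ x ≤ ν.real {ω | a ≤ f ω} := by
  set F : ℝ → ℝ := fun a => ν.real {ω | a < f ω}
  have hmeas : ∀ a, MeasurableSet {ω | a < f ω} := fun a => measurableSet_lt measurable_const hf
  have hanti : Antitone fun a => {ω | a < f ω} := fun a b hab ω hω => hab.trans_lt hω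
  have hF : Antitone F := fun a b hab => measureReal_mono (hanti hab)
  have hbot : Tendsto F atBot (𝓝 (ν.real univ)) := by
    convert tendsto_measureReal_iUnion_atBot (ν := ν) hanti
    exact (iUnion_eq_univ_iff.2 fun ω => ⟨f ω - 1, by simp⟩).symm
  have htop : Tendsto F atTop (𝓝 0) := by
    convert tendsto_measureReal_iInter_atTop (ν := ν) hmeas hanti
    rw [iInter_eq_empty_iff.2 fun ω => ⟨f ω, by simp⟩, measureReal_empty]
  set T := {a | x < F a}
  obtain ⟨b, hb⟩ := (hbot.eventually (eventually_gt_nhds hx)).exists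
  obtain ⟨c, hc⟩ := (htop.eventually (eventually_lt_nhds hx₀)).exists
  have hT : BddAbove T :=
    ⟨c, fun t ht => le_of_not_gt fun hct => lt_asymm (ht.trans_le (hF hct.le)) hc⟩
  refine ⟨sSup T, ?_, ?_⟩
  · obtain ⟨u, hu_anti, hu_gt, hu⟩ := exists_seq_strictAnti_tendsto (sSup T)
    have hU : (⋃ n, {ω | u n < f ω}) = {ω | sSup T < f ω} := by
      ext ω
      simp only [mem_iUnion, mem_ofPred_eq]
      exact ⟨fun ⟨n, hn⟩ => (hu_gt n).trans hn,
        fun h => (hu.eventually (eventually_lt_nhds h)).exists⟩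
    refine le_of_tendsto' (hU ▸ tendsto_measureReal_iUnion_atTop (hanti.comp hu_anti.antitone))
      fun n => not_lt.1 fun h => (hu_gt n).not_ge (le_csSup hT h)
  · obtain ⟨v, hv_mono, hv_lt, hv⟩ := exists_seq_strictMono_tendsto (sSup T)
    have hI : (⋂ n, {ω | v n < f ω}) = {ω | sSup T ≤ f ω} := by
      ext ω
      simp only [mem_iInter, mem_ofPred_eq]
      exact ⟨fun h => le_of_tendsto' hv fun n => (h n).le, fun h n => (hv_lt n).trans_le h⟩
    refine ge_of_tendsto' (hI ▸ tendsto_measureReal_iInter_atTop (fun n => hmeas _)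
      (hanti.comp_monotone hv_mono.monotone)) fun n => ?_
    obtain ⟨t, ht, hvt⟩ := exists_lt_of_lt_csSup ⟨b, hb⟩ (hv_lt n)
    exact (ht.trans_le (hF hvt.le)).le

theorem exists_subset_measureReal_eq {Y : Ω → ℝ} (hY : Measurable Y)
    (hcont : Continuous fun y => ν.real {ω | Y ω < y}) {E : Set Ω} (hE : MeasurableSet E)
    {t : ℝ} (ht₀ : 0 ≤ t) (htE : t ≤ ν.real E) :
    ∃ D ⊆ E, MeasurableSet D ∧ ν.real D = t := by
  rcases ht₀.eq_or_lt with rfl | ht₀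
  · exact ⟨∅, empty_subset _, .empty, measureReal_empty⟩
  rcases htE.eq_or_lt with rfl | htE
  · exact ⟨E, subset_rfl, hE, rfl⟩
  have hYm : ∀ y, MeasurableSet {ω | Y ω < y} := fun y => measurableSet_lt hY measurable_const
  have hYmono : Monotone fun y => {ω | Y ω < y} := fun y z hyz ω hω => lt_of_lt_of_le hω hyz
  set s : ℝ → Set Ω := fun y => E ∩ {ω | Y ω < y}
  have hs : Monotone s := fun y z hyz => inter_subset_inter_right _ (hYmono hyz)
  have hdist : ∀ y z, dist (ν.real (s y)) (ν.real (s z)) ≤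
      dist (ν.real {ω | Y ω < y}) (ν.real {ω | Y ω < z}) := by
    intro y z
    wlog hyz : y ≤ z generalizing y z
    · exact (dist_comm _ _).trans_le ((this z y (le_of_not_ge hyz)).trans_eq (dist_comm _ _))
    rw [Real.dist_eq, Real.dist_eq, abs_sub_comm, abs_sub_comm (ν.real {ω | Y ω < y}),
      ← measureReal_sdiff (μ := ν) (hs hyz) (hE.inter (hYm y)),
      ← measureReal_sdiff (μ := ν) (hYmono hyz) (hYm y),
      abs_of_nonneg measureReal_nonneg, abs_of_nonneg measureReal_nonneg]
    exact measureReal_mono fun ω ⟨⟨hωE, hz⟩, hn⟩ => ⟨hz, fun hy => hn ⟨hωE, hy⟩⟩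
  have hsc : Continuous fun y => ν.real (s y) := continuous_of_dist_le_dist hcont hdist
  have htop : Tendsto (fun y => ν.real (s y)) atTop (𝓝 (ν.real E)) := by
    convert tendsto_measureReal_iUnion_atTop (ν := ν) hs
    ext ω
    simpa [s] using fun _ => exists_gt (Y ω)
  have hbot : Tendsto (fun y => ν.real (s y)) atBot (𝓝 0) := by
    convert tendsto_measureReal_iInter_atBot (ν := ν) (fun y => hE.inter (hYm y)) hs
    rw [iInter_eq_empty_iff.2 fun ω => ⟨Y ω, fun h => lt_irrefl (Y ω) h.2⟩, measureReal_empty]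
  obtain ⟨a, ha⟩ := (hbot.eventually (eventually_lt_nhds ht₀)).exists
  obtain ⟨b, hb⟩ := (htop.eventually (eventually_gt_nhds htE)).exists
  obtain ⟨y, hy⟩ := mem_range_of_exists_le_of_exists_ge hsc ⟨a, ha.le⟩ ⟨b, hb.le⟩
  exact ⟨s y, inter_subset_left, hE.inter (hYm y), hy⟩

theorem exists_measureReal_neymanPearson_set {G H Y : Ω → ℝ} (hG : Measurable G)
    (hG₀ : ∀ ω, 0 ≤ G ω) (hH : Measurable H) (hH₀ : ∀ᵐ ω ∂ν, 0 < H ω) (hY : Measurable Y)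
    (hcont : Continuous fun y => ν.real {ω | Y ω < y}) {x : ℝ} (hx : 0 < x) :
    ∃ a, 0 ≤ a ∧ ∃ A, MeasurableSet A ∧ {ω | a * H ω < G ω} ⊆ A ∧
      A ⊆ {ω | a * H ω ≤ G ω} ∧ ν.real A = min x (ν.real univ) := by
  rcases le_or_gt (ν.real univ) x with hxν | hxν
  · exact ⟨0, le_rfl, univ, .univ, subset_univ _, fun ω _ => by simp [hG₀ ω],
      (min_eq_right hxν).symm⟩
  obtain ⟨a, hlt, hle⟩ := exists_measureReal_lt_le_le_measureReal_le
    (f := fun ω => G ω / H ω) (hG.div hH) hx hxν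
  have hlt_ae : {ω | a < G ω / H ω} =ᵐ[ν] {ω | a * H ω < G ω} :=
    eventuallyEq_set.2 <| hH₀.mono fun ω hω => lt_div_iff₀ hω
  have hle_ae : {ω | a ≤ G ω / H ω} =ᵐ[ν] {ω | a * H ω ≤ G ω} :=
    eventuallyEq_set.2 <| hH₀.mono fun ω hω => le_div_iff₀ hω
  rw [measureReal_congr hlt_ae] at hlt
  rw [measureReal_congr hle_ae] at hle
  have ha : 0 ≤ a := by
    by_contra! ha
    have huniv : {ω | a * H ω < G ω} =ᵐ[ν] univ := by
      refine eventuallyEq_set.2 <| hH₀.mono fun ω hω => ?_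
      simpa using (mul_neg_of_neg_of_pos ha hω).trans_le (hG₀ ω)
    rw [measureReal_congr huniv] at hlt
    exact hlt.not_gt hxν
  set S := {ω | a * H ω < G ω}
  set E := {ω | a * H ω = G ω}
  have hS : MeasurableSet S := measurableSet_lt (hH.const_mul a) hG
  have hE : MeasurableSet E := measurableSet_eq_fun (hH.const_mul a) hG
  have hSE : Disjoint S E := disjoint_left.2 fun ω hS hE => hS.ne hE
  have hSE_eq : {ω | a * H ω ≤ G ω} = S ∪ E := by
    ext ω
    exact le_iff_lt_or_eq (a := a * H ω)
  rw [hSE_eq, measureReal_union hSE hE] at hle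
  obtain ⟨D, hDE, hD, hDν⟩ :=
    exists_subset_measureReal_eq hY hcont hE (sub_nonneg.2 hlt) (by linarith)
  refine ⟨a, ha, S ∪ D, hS.union hD, subset_union_left, ?_, ?_⟩
  · exact hSE_eq ▸ union_subset_union_right S hDE
  · rw [measureReal_union (hSE.mono_right hDE) hD, hDν, min_eq_left hxν.le]
    ring

end

section

variable {Ω : Type*} [MeasurableSpace Ω] {μ : Measure Ω}

theorem integral_mul_indicator_one (f : Ω → ℝ) {s : Set Ω} (hs : MeasurableSet s) :
    ∫ ω, f ω * s.indicator (fun _ => (1 : ℝ)) ω ∂μ = ∫ ω in s, f ω ∂μ := by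
  rw [← integral_indicator hs]
  congr 1 with ω
  by_cases h : ω ∈ s <;> simp [h]

theorem measureReal_withDensity_ofReal {f : Ω → ℝ} (hf : Integrable f μ) (hf₀ : ∀ ω, 0 ≤ f ω)
    {s : Set Ω} (hs : MeasurableSet s) :
    (μ.withDensity fun ω => ENNReal.ofReal (f ω)).real s = ∫ ω in s, f ω ∂μ := by
  rw [measureReal_def, withDensity_apply _ hs,
    ← ofReal_integral_eq_lintegral_ofReal hf.integrableOn (ae_of_all _ hf₀),
    ENNReal.toReal_ofReal (setIntegral_nonneg hs fun ω _ => hf₀ ω)]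

theorem ae_pos_withDensity_ofReal {f : Ω → ℝ} (hf : Measurable f) :
    ∀ᵐ ω ∂μ.withDensity (fun ω => ENNReal.ofReal (f ω)), 0 < f ω :=
  (ae_withDensity_iff hf.ennreal_ofReal).2 <|
    ae_of_all _ fun _ h => ENNReal.ofReal_pos.1 (pos_iff_ne_zero.2 h)

theorem exists_neymanPearson_set {G H Y : Ω → ℝ} (hG : Measurable G) (hG₀ : ∀ ω, 0 ≤ G ω)
    (hH : Measurable H) (hH₀ : ∀ ω, 0 ≤ H ω) (hHi : Integrable H μ) (hY : Measurable Y)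
    (hcont : Continuous fun y : ℝ => ∫ ω, H ω * (if Y ω < y then (1 : ℝ) else 0) ∂μ)
    {x : ℝ} (hx : 0 < x) :
    ∃ a, 0 ≤ a ∧ ∃ A, MeasurableSet A ∧ {ω | a * H ω < G ω} ⊆ A ∧
      A ⊆ {ω | a * H ω ≤ G ω} ∧
      ∫ ω, H ω * A.indicator (fun _ => (1 : ℝ)) ω ∂μ = min x (∫ ω, H ω ∂μ) := by
  set ν := μ.withDensity fun ω => ENNReal.ofReal (H ω)
  have : IsFiniteMeasure ν := isFiniteMeasure_withDensity_ofReal hHi.2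
  have hν : ∀ {s}, MeasurableSet s →
      ν.real s = ∫ ω, H ω * s.indicator (fun _ => (1 : ℝ)) ω ∂μ := fun hs => by
    rw [measureReal_withDensity_ofReal hHi hH₀ hs, integral_mul_indicator_one _ hs]
  have hνY : Continuous fun y => ν.real {ω | Y ω < y} := by
    simpa [hν (measurableSet_lt hY measurable_const), indicator_apply] using hcont
  obtain ⟨a, ha, A, hA, hSA, hAS, hνA⟩ := exists_measureReal_neymanPearson_set (ν := ν) hG hG₀ hH
    (ae_pos_withDensity_ofReal hH) hY hνY hx
  refine ⟨a, ha, A, hA, hSA, hAS, ?_⟩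
  rw [← hν hA, hνA, measureReal_withDensity_ofReal hHi hH₀ .univ, setIntegral_univ]

end

namespace QH

variable {Ω : Type*} [MeasurableSpace Ω] {μ : Measure Ω}

theorem isRandTest_indicator_one {A : Set Ω} (hA : MeasurableSet A) :
    IsRandTest (A.indicator fun _ => (1 : ℝ)) :=
  ⟨measurable_const.indicator hA, fun ω => by by_cases h : ω ∈ A <;> simp [h]⟩

theorem IsRandTest.integrable_mul {X f : Ω → ℝ} (hX : IsRandTest X) (hf : Integrable f μ) :
    Integrable (fun ω => f ω * X ω) μ :=
  hf.mul_bdd hX.1.aestronglyMeasurable <| ae_of_all _ fun ω => by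
    simpa [abs_of_nonneg (hX.2 ω).1] using (hX.2 ω).2

theorem IsRandTest.integral_mul_le {X f : Ω → ℝ} (hX : IsRandTest X) (hf : Integrable f μ)
    (hf₀ : ∀ ω, 0 ≤ f ω) : ∫ ω, f ω * X ω ∂μ ≤ ∫ ω, f ω ∂μ :=
  integral_mono (hX.integrable_mul hf) hf fun ω => mul_le_of_le_one_right (hf₀ ω) (hX.2 ω).2

theorem integral_mul_le_of_neymanPearson {G H X : Ω → ℝ} {a : ℝ} {A : Set Ω} (ha : 0 ≤ a)
    (hA : MeasurableSet A) (hG : Integrable G μ) (hH : Integrable H μ) (hX : IsRandTest X)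
    (hSA : {ω | a * H ω < G ω} ⊆ A) (hAS : A ⊆ {ω | a * H ω ≤ G ω})
    (hXA : ∫ ω, H ω * X ω ∂μ ≤ ∫ ω, H ω * A.indicator (fun _ => (1 : ℝ)) ω ∂μ) :
    ∫ ω, G ω * X ω ∂μ ≤ ∫ ω, G ω * A.indicator (fun _ => (1 : ℝ)) ω ∂μ := by
  have h1A := isRandTest_indicator_one hA
  have hH1A := h1A.integrable_mul hH
  have hG1A := h1A.integrable_mul hG
  have hlagrange : a * (∫ ω, H ω * A.indicator (fun _ => (1 : ℝ)) ω ∂μ - ∫ ω, H ω * X ω ∂μ) ≤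
      ∫ ω, G ω * A.indicator (fun _ => (1 : ℝ)) ω ∂μ - ∫ ω, G ω * X ω ∂μ := by
    rw [← integral_sub hH1A (hX.integrable_mul hH), ← integral_sub hG1A (hX.integrable_mul hG),
      ← integral_const_mul]
    refine integral_mono ((hH1A.sub (hX.integrable_mul hH)).const_mul a)
      (hG1A.sub (hX.integrable_mul hG)) fun ω => ?_
    obtain ⟨hX₀, hX₁⟩ := hX.2 ω
    by_cases hω : ω ∈ A
    · have : a * H ω ≤ G ω := hAS hω
      simp only [indicator_of_mem hω]
      nlinarith
    · have : G ω ≤ a * H ω := not_lt.1 fun h => hω (hSA h)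
      simp only [indicator_of_notMem hω]
      nlinarith
  nlinarith [mul_nonneg ha (sub_nonneg.2 hXA)]

theorem powerInf_singleton (g X : Ω → ℝ) : powerInf μ {g} X = ∫ ω, g ω * X ω ∂μ := by
  simp [powerInf]

theorem sSup_powerInf_singleton_eq {g X₀ : Ω → ℝ} {S : Set (Ω → ℝ)} (hX₀ : X₀ ∈ S)
    (hopt : ∀ X ∈ S, ∫ ω, g ω * X ω ∂μ ≤ ∫ ω, g ω * X₀ ω ∂μ) :
    sSup (powerInf μ {g} '' S) = ∫ ω, g ω * X₀ ω ∂μ := by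
  refine IsGreatest.csSup_eq ⟨⟨X₀, hX₀, powerInf_singleton g X₀⟩, ?_⟩
  rintro _ ⟨X, hX, rfl⟩
  rw [powerInf_singleton]
  exact hopt X hX

end QH

theorem stmt_10_general {Ω : Type*} [MeasurableSpace Ω] (μ : MeasureTheory.Measure Ω)
    (Ghat Hhat : Ω → ℝ)
    (hGm : Measurable Ghat) (hGpos : ∀ ω, 0 ≤ Ghat ω) (hGi : MeasureTheory.Integrable Ghat μ)
    (hHm : Measurable Hhat) (hHpos : ∀ ω, 0 ≤ Hhat ω) (hHi : MeasureTheory.Integrable Hhat μ)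
    (x : ℝ) (hx : 0 < x)
    (Y : Ω → ℝ) (hYm : Measurable Y)
    (hg : Continuous fun y : ℝ => ∫ ω, Hhat ω * (if Y ω < y then (1 : ℝ) else 0) ∂μ) :
    ∃ A : Set Ω, MeasurableSet A ∧
      (∫ ω, Hhat ω * Set.indicator A (fun _ => (1 : ℝ)) ω ∂μ ≤ x) ∧
      (∫ ω, Ghat ω * Set.indicator A (fun _ => (1 : ℝ)) ω ∂μ = QH.V μ {Ghat} {Hhat} x) ∧
      QH.V1 μ {Ghat} {Hhat} x = QH.V μ {Ghat} {Hhat} x := by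
  obtain ⟨a, ha, A, hA, hSA, hAS, hHA⟩ := exists_neymanPearson_set hGm hGpos hHm hHpos hHi hYm hg hx
  have hAtest : A.indicator (fun _ => (1 : ℝ)) ∈ QH.Tests μ {Hhat} x :=
    ⟨QH.isRandTest_indicator_one hA, by rintro _ rfl; exact hHA ▸ min_le_left _ _⟩
  have hopt : ∀ X ∈ QH.Tests μ {Hhat} x, ∫ ω, Ghat ω * X ω ∂μ ≤
      ∫ ω, Ghat ω * A.indicator (fun _ => (1 : ℝ)) ω ∂μ := by
    rintro X ⟨hX, hXx⟩
    exact QH.integral_mul_le_of_neymanPearson ha hA hGi hHi hX hSA hAS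
      (hHA ▸ le_min (hXx _ rfl) (hX.integral_mul_le hHi hHpos))
  have hV := QH.sSup_powerInf_singleton_eq hAtest hopt
  refine ⟨A, hA, hAtest.2 _ rfl, hV.symm, ?_⟩
  rw [QH.V1, QH.V, hV]
  exact QH.sSup_powerInf_singleton_eq ⟨hAtest, indicator_eq_zero_or_self A _⟩
    fun X hX => hopt X hX.1

/-- For singletons `𝒢 = {Ĝ}`, `ℋ = {Ĥ}` of integrable nonnegative random
variables and `x > 0`, if there is an `𝓕`-measurable `Y` such that
`y ↦ 𝔼[Ĥ·1_{Y < y}]` is continuous, then some pure test `1_A` satisfies the constraint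
and attains `V(x)`; consequently `V₁(x) = V(x)`. -/
theorem stmt_10 {Ω : Type*} [MeasurableSpace Ω] (μ : MeasureTheory.Measure Ω)
    [MeasureTheory.IsProbabilityMeasure μ]
    (Ghat Hhat : Ω → ℝ)
    (hGm : Measurable Ghat) (hGpos : ∀ ω, 0 ≤ Ghat ω) (hGi : MeasureTheory.Integrable Ghat μ)
    (hHm : Measurable Hhat) (hHpos : ∀ ω, 0 ≤ Hhat ω) (hHi : MeasureTheory.Integrable Hhat μ)
    (x : ℝ) (hx : 0 < x)
    (Y : Ω → ℝ) (hYm : Measurable Y)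
    (hg : Continuous fun y : ℝ => ∫ ω, Hhat ω * (if Y ω < y then (1 : ℝ) else 0) ∂μ) :
    ∃ A : Set Ω, MeasurableSet A ∧
      (∫ ω, Hhat ω * Set.indicator A (fun _ => (1 : ℝ)) ω ∂μ ≤ x) ∧
      (∫ ω, Ghat ω * Set.indicator A (fun _ => (1 : ℝ)) ω ∂μ = QH.V μ {Ghat} {Hhat} x) ∧
      QH.V1 μ {Ghat} {Hhat} x = QH.V μ {Ghat} {Hhat} x :=
  stmt_10_general μ Ghat Hhat hGm hGpos hGi hHm hHpos hHi x hx Y hYm hg
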